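/- arXiv:2507.03192 — 3 statements merged into one kernel-verified Lean document; each statement's English description precedes it below -/
import Mathlib

section
/- Let V, W be finite-dimensional real inner product spaces, B : V → W linear, F : V → ℝ convex differentiable, g ∈ W. Suppose (u, p) satisfies the optimality conditions ∇F(u) + B*p = 0 and Bu = g, and (u⁺, p_old, p⁺) satisfies the augmented Lagrangian update equations ∇F(u⁺) + B*p_old + ε⁻¹ B*(Bu⁺ − g) = 0 and p⁺ = p_old + ε⁻¹(Bu⁺ − g) with ε > 0. Then the symmetrized Bregman divergence satisfies D_F^sym(u⁺, u) = −ε‖p⁺ − p‖² + ε⟨p⁺ − p, p_old − p⟩. -/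
open RealInnerProductSpace

theorem augmented_lagrangian_identity
    {V W : Type*} [NormedAddCommGroup V] [InnerProductSpace ℝ V]
    [FiniteDimensional ℝ V]
    [NormedAddCommGroup W] [InnerProductSpace ℝ W] [FiniteDimensional ℝ W]
    (B : V →ₗ[ℝ] W) (F : V → ℝ) (gradF : V → V)
    (hconv : ConvexOn ℝ Set.univ F)
    (hgrad : ∀ x, HasGradientAt F (gradF x) x)
    (g : W) (ε : ℝ) (hε : 0 < ε)
    (u uplus : V) (p pold pplus : W)
    (hopt1 : gradF u + LinearMap.adjoint B p = 0)
    (hopt2 : B u = g)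
    (hup1 : gradF uplus + LinearMap.adjoint B pold
      + ε⁻¹ • LinearMap.adjoint B (B uplus - g) = 0)
    (hup2 : pplus = pold + ε⁻¹ • (B uplus - g)) :
    ⟪gradF uplus - gradF u, uplus - u⟫
      = -ε * ‖pplus - p‖ ^ 2 + ε * ⟪pplus - p, pold - p⟫ := by
  have hεne : ε ≠ 0 := ne_of_gt hε
  have hBg : B uplus - g = ε • (pplus - pold) := by
    rw [hup2, add_sub_cancel_left, smul_inv_smul₀ hεne]
  have h1 : gradF u = - LinearMap.adjoint B p :=
    eq_neg_of_add_eq_zero_left hopt1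
  have h2 : gradF uplus = - LinearMap.adjoint B pplus := by
    have : ε⁻¹ • LinearMap.adjoint B (B uplus - g)
        = LinearMap.adjoint B (pplus - pold) := by
      rw [hBg, map_smul, inv_smul_smul₀ hεne]
    rw [this] at hup1
    rw [eq_neg_iff_add_eq_zero]
    have hsplit : (LinearMap.adjoint B) pplus
        = (LinearMap.adjoint B) pold + (LinearMap.adjoint B) (pplus - pold) := by
      rw [← map_add]; congr 1; abel
    rw [hsplit, ← add_assoc]; exact hup1
  have hdiff : gradF uplus - gradF u = LinearMap.adjoint B (p - pplus) := by
    rw [h1, h2, map_sub]; abel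
  rw [hdiff, LinearMap.adjoint_inner_left, map_sub, hopt2, hBg,
    real_inner_smul_right, ← real_inner_self_eq_norm_sq]
  simp only [inner_sub_left, inner_sub_right]
  rw [real_inner_comm pold pplus, real_inner_comm p pplus]
  ring
end

section
/- The function φ : ℝ^d → ℝ, φ(x) = |x|³ (Euclidean norm cubed) is convex, and its Bregman divergence satisfies d(w; v) := φ(v+w) − φ(v) − ⟨∇φ(v), w⟩ ≥ c |w|³ for some universal constant c > 0 independent of v, w. -/
/-! `‖x‖³` is convex as a power of the nonnegative convex function `‖x‖`. For the Bregman
bound, polarization writes `⟪v, w⟫` through `a = ‖v‖`, `b = ‖v + w‖` and `t = ‖w‖`, turning the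
divergence into `(b - a)² (b + a / 2) + (3 / 2) a t²`. If `a` is small compared with `t`, then
`b ≥ t - a` makes the first term of order `t³`; otherwise the second term is. -/

open RealInnerProductSpace

lemma cube_le_of_le_add {a b t : ℝ} (ha : 0 ≤ a) (hb : 0 ≤ b) (hab : t ≤ a + b) :
    3 / 16 * t ^ 3 ≤ (b - a) ^ 2 * (b + a / 2) + 3 / 2 * a * t ^ 2 := by
  rcases le_or_gt a (t / 4) with hsmall | hlarge
  · have hba : t / 2 ≤ b - a := by linarith
    have hsq : (t / 2) ^ 2 ≤ (b - a) ^ 2 := by nlinarith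
    have hfirst : (t / 2) ^ 2 * (3 * t / 4) ≤ (b - a) ^ 2 * (b + a / 2) := by nlinarith
    nlinarith
  · nlinarith [sq_nonneg t]

section InnerProductSpace

variable {E : Type*} [NormedAddCommGroup E] [InnerProductSpace ℝ E]

lemma norm_add_cube_sub_norm_cube_sub_inner_eq (v w : E) :
    ‖v + w‖ ^ 3 - ‖v‖ ^ 3 - ⟪(3 * ‖v‖) • v, w⟫ =
      (‖v + w‖ - ‖v‖) ^ 2 * (‖v + w‖ + ‖v‖ / 2) + 3 / 2 * ‖v‖ * ‖w‖ ^ 2 := by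
  rw [real_inner_smul_left,
    real_inner_eq_norm_add_mul_self_sub_norm_mul_self_sub_norm_mul_self_div_two]
  ring

lemma bregman_norm_cube_ge (v w : E) :
    3 / 16 * ‖w‖ ^ 3 ≤ ‖v + w‖ ^ 3 - ‖v‖ ^ 3 - ⟪(3 * ‖v‖) • v, w⟫ := by
  rw [norm_add_cube_sub_norm_cube_sub_inner_eq]
  refine cube_le_of_le_add (norm_nonneg v) (norm_nonneg (v + w)) ?_
  simpa [add_comm ‖v‖] using norm_sub_le (v + w) v

end InnerProductSpace

theorem norm_cubed_convex_and_bregman_lower_bound :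
    (∀ d : ℕ, ConvexOn ℝ Set.univ
      (fun x : EuclideanSpace ℝ (Fin d) => ‖x‖ ^ 3)) ∧
    ∃ c : ℝ, 0 < c ∧ ∀ (d : ℕ) (v w : EuclideanSpace ℝ (Fin d)),
      ‖v + w‖ ^ 3 - ‖v‖ ^ 3 - ⟪(3 * ‖v‖) • v, w⟫ ≥ c * ‖w‖ ^ 3 :=
  ⟨fun _ => convexOn_univ_norm.pow (fun _ _ => norm_nonneg _) 3,
    3 / 16, by norm_num, fun _ => bregman_norm_cube_ge⟩
end

section
/- The function φ(x) = ‖x‖³ on ℝ^d has Bregman divergence satisfying the upper bound d(w; v) = φ(v+w) − φ(v) − ⟨∇φ(v), w⟩ ≤ C(‖v‖ + ‖w‖)‖w‖² for some universal constant C > 0. -/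
open RealInnerProductSpace

theorem norm_cubed_bregman_upper_bound :
    ∃ C : ℝ, 0 < C ∧ ∀ (d : ℕ) (v w : EuclideanSpace ℝ (Fin d)),
      ‖v + w‖ ^ 3 - ‖v‖ ^ 3 - ⟪(3 * ‖v‖) • v, w⟫
        ≤ C * (‖v‖ + ‖w‖) * ‖w‖ ^ 2 := by
  refine ⟨3, by norm_num, fun d v w => ?_⟩
  have hinner : ⟪(3 * ‖v‖) • v, w⟫ = (3 * ‖v‖) * ⟪v, w⟫ := real_inner_smul_left v w _
  have hsq : ‖v + w‖ ^ 2 = ‖v‖ ^ 2 + 2 * ⟪v, w⟫ + ‖w‖ ^ 2 := norm_add_sq_real v w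
  set u := ‖v + w‖ with hu
  set a := ‖v‖ with ha
  set b := ‖w‖ with hb
  have ha0 : 0 ≤ a := norm_nonneg _
  have hb0 : 0 ≤ b := norm_nonneg _
  have hu0 : 0 ≤ u := norm_nonneg _
  have hub : u ≤ a + b := norm_add_le v w
  have hlb : a - b ≤ u := by
    have h := (abs_le.mp (abs_norm_sub_norm_le (v + w) v)).1
    have h2 : ‖(v + w) - v‖ = b := by rw [add_sub_cancel_left]
    rw [h2] at h
    linarith
  have hs : ⟪v, w⟫ = (u ^ 2 - a ^ 2 - b ^ 2) / 2 := by linarith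
  rw [hinner, hs]
  have h1 : (u - a) ^ 2 ≤ b ^ 2 := by nlinarith
  have h2 : (u - a) ^ 2 * (u + a / 2) ≤ b ^ 2 * ((a + b) + a / 2) :=
    mul_le_mul h1 (by linarith) (by linarith) (by positivity)
  have hid : u ^ 3 - a ^ 3 - 3 * a * ((u ^ 2 - a ^ 2 - b ^ 2) / 2)
      = (u - a) ^ 2 * (u + a / 2) + (3 / 2) * a * b ^ 2 := by ring
  nlinarith [mul_nonneg hb0 (mul_nonneg hb0 hb0), mul_nonneg ha0 (mul_nonneg hb0 hb0)]
end
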